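/- For every positive integer n, every primitive n-th root of unity ζ_n in ℂ, and every positive integer r, one has z_n({3}^r; ζ_n) = (1/(n^2·(r+1))) · ( binom(n+2r+1, 3r+2) + (-1)^r · binom(n+r, 3r+2) ) · (1-ζ_n)^{3r}. -/

import Mathlib

open Finset

/-- The set of tuples `(m_1,...,m_r)` with `n > m_1 > m_2 > ... > m_r > 0`. -/
def msets (n r : ℕ) : Finset (Fin r → Fin n) :=
  Finset.univ.filter fun m =>
    (∀ i j : Fin r, i < j → m j < m i) ∧ ∀ i, 0 < (m i : ℕ)

/-- The set of tuples `(m_1,...,m_r)` with `n > m_1 ≥ m_2 ≥ ... ≥ m_r > 0`. -/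
def msetsStar (n r : ℕ) : Finset (Fin r → Fin n) :=
  Finset.univ.filter fun m =>
    (∀ i j : Fin r, i ≤ j → m j ≤ m i) ∧ ∀ i, 0 < (m i : ℕ)

/-- The finite multiple harmonic q-series
`z_n(k_1,…,k_r; q) = Σ_{n > m_1 > … > m_r > 0} Π_i q^{(k_i-1)m_i}/[m_i]_q^{k_i}`,
where `[m]_q = (1-q^m)/(1-q)`. -/
noncomputable def z (n : ℕ) {r : ℕ} (k : Fin r → ℕ) (q : ℂ) : ℂ :=
  ∑ m ∈ msets n r,
    ∏ i, q ^ ((k i - 1) * (m i : ℕ)) / ((1 - q ^ (m i : ℕ)) / (1 - q)) ^ (k i)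

/-- The star version `z*_n(k; q)`, summed over `n > m_1 ≥ … ≥ m_r > 0`. -/
noncomputable def zstar (n : ℕ) {r : ℕ} (k : Fin r → ℕ) (q : ℂ) : ℂ :=
  ∑ m ∈ msetsStar n r,
    ∏ i, q ^ ((k i - 1) * (m i : ℕ)) / ((1 - q ^ (m i : ℕ)) / (1 - q)) ^ (k i)

/-- The modified value `z̄_n(k;q) = (1-q)^{-wt(k)} z_n(k;q)`. -/
noncomputable def zbar (n : ℕ) {r : ℕ} (k : Fin r → ℕ) (q : ℂ) : ℂ :=
  (1 - q)⁻¹ ^ (∑ i, k i) * z n k q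

/-- The modified star value `z̄*_n(k;q) = (1-q)^{-wt(k)} z*_n(k;q)`. -/
noncomputable def zstarbar (n : ℕ) {r : ℕ} (k : Fin r → ℕ) (q : ℂ) : ℂ :=
  (1 - q)⁻¹ ^ (∑ i, k i) * zstar n k q

/-- `I(k,r,s)`: the set of indices (tuples of positive integers) of weight `k`,
depth `r` and height `s`. -/
def indexSet3 (k r s : ℕ) : Finset (Fin r → ℕ) :=
  (Finset.Nat.antidiagonalTuple r k).filter fun a =>
    (∀ i, 1 ≤ a i) ∧ (Finset.univ.filter fun i => 2 ≤ a i).card = s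

/-- `I(k,r)`: the set of indices of weight `k` and depth `r`. -/
def indexSet2 (k r : ℕ) : Finset (Fin r → ℕ) :=
  (Finset.Nat.antidiagonalTuple r k).filter fun a => ∀ i, 1 ≤ a i

/-- The one-variable finite q-multiple polylogarithm
`L_{k_1,…,k_r}^{(n)}(t;q) = Σ_{n > m_1 > … > m_r > 0} t^{m_1} / Π_i (1-q^{m_i})^{k_i}`,
with `L_∅(t) = 1`. -/
noncomputable def Lpoly (n : ℕ) {r : ℕ} (k : Fin r → ℕ) (q t : ℂ) : ℂ :=
  ∑ m ∈ msets n r,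
    ∏ i : Fin r, (if i.val = 0 then t ^ (m i : ℕ) else 1) / (1 - q ^ (m i : ℕ)) ^ (k i)

/-- The star version `L*_{k_1,…,k_r}^{(n)}(t;q)`, summed over `n > m_1 ≥ … ≥ m_r > 0`. -/
noncomputable def LpolyStar (n : ℕ) {r : ℕ} (k : Fin r → ℕ) (q t : ℂ) : ℂ :=
  ∑ m ∈ msetsStar n r,
    ∏ i : Fin r, (if i.val = 0 then t ^ (m i : ℕ) else 1) / (1 - q ^ (m i : ℕ)) ^ (k i)

/-!
Put `w_m = ζ^{2m} / (1 - ζ^m)^3`, so that `z_n({3}^r; ζ) = (1 - ζ)^{3r} e_r(w_1, …, w_{n-1})`.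
For `x` fixed, factor `(1 - t)^3 + x t^2 = (a - t)(b - t)(c - t)`, where `a, b, c` are the roots of
`T^3 - (3 + x) T^2 + 3 T - 1` and `abc = 1`. As `∏_{m<n} (a - ζ^m) = a^n - 1` and
`∏_{0<m<n} (1 - ζ^m) = n`,
  `x n^3 ∏_{0<m<n} (1 + x w_m) = (a^n - 1)(b^n - 1)(c^n - 1) = p_n(a, b, c) - p_n(ab, bc, ca)`,
a difference of power sums of the roots and of their reciprocals `ab = c⁻¹, …`. Newton's recurrence
makes both polynomials in `x`, whose coefficients are sums of binomial coefficients (the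
recurrence for them is a third finite difference), and the coefficient of `x^{r+1}` gives the formula.
-/

open Polynomial

section CubicPowerSum

variable {R : Type*} [CommRing R]

def cubicPowerSum (e₁ e₂ e₃ : R) : ℕ → R
  | 0 => 3
  | 1 => e₁
  | 2 => e₁ ^ 2 - 2 * e₂
  | k + 3 => e₁ * cubicPowerSum e₁ e₂ e₃ (k + 2) - e₂ * cubicPowerSum e₁ e₂ e₃ (k + 1) +
      e₃ * cubicPowerSum e₁ e₂ e₃ k

theorem pow_add_pow_add_pow_eq_cubicPowerSum (a b c : R) : ∀ k : ℕ,
    a ^ k + b ^ k + c ^ k = cubicPowerSum (a + b + c) (a * b + b * c + c * a) (a * b * c) k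
  | 0 => by norm_num [cubicPowerSum]
  | 1 => by simp [cubicPowerSum]
  | 2 => by rw [cubicPowerSum]; ring
  | k + 3 => by
    rw [cubicPowerSum, ← pow_add_pow_add_pow_eq_cubicPowerSum a b c k,
      ← pow_add_pow_add_pow_eq_cubicPowerSum a b c (k + 1),
      ← pow_add_pow_add_pow_eq_cubicPowerSum a b c (k + 2)]
    ring

theorem map_cubicPowerSum {S F : Type*} [CommRing S] [FunLike F R S] [RingHomClass F R S]
    (f : F) (e₁ e₂ e₃ : R) : ∀ k : ℕ,
    f (cubicPowerSum e₁ e₂ e₃ k) = cubicPowerSum (f e₁) (f e₂) (f e₃) k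
  | 0 => map_ofNat f 3
  | 1 => rfl
  | 2 => by simp [cubicPowerSum, map_ofNat]
  | k + 3 => by
    simp only [cubicPowerSum, map_add, map_sub, map_mul, map_cubicPowerSum f e₁ e₂ e₃ k,
      map_cubicPowerSum f e₁ e₂ e₃ (k + 1), map_cubicPowerSum f e₁ e₂ e₃ (k + 2)]

end CubicPowerSum

/-- Power sums of the roots of `T^3 - (3 + X) T^2 + 3 T - 1 = (T - 1)^3 - X T^2` and of their
reciprocals, as polynomials in `X`. -/
noncomputable abbrev rootPowerSum (k : ℕ) : ℤ[X] := cubicPowerSum (3 + X) 3 1 k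

noncomputable abbrev invRootPowerSum (k : ℕ) : ℤ[X] := cubicPowerSum 3 (3 + X) 1 k

theorem Nat.choose_third_difference (A t : ℕ) :
    (A + 3).choose (t + 3) + 3 * (A + 1).choose (t + 3) =
      3 * (A + 2).choose (t + 3) + A.choose (t + 3) + A.choose t := by
  have h₁ : (A + 1).choose (t + 1) = A.choose t + A.choose (t + 1) := Nat.choose_succ_succ' _ _
  have h₂ : (A + 1).choose (t + 2) = A.choose (t + 1) + A.choose (t + 2) :=
    Nat.choose_succ_succ' _ _
  have h₃ : (A + 1).choose (t + 3) = A.choose (t + 2) + A.choose (t + 3) :=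
    Nat.choose_succ_succ' _ _
  have h₄ : (A + 2).choose (t + 2) = (A + 1).choose (t + 1) + (A + 1).choose (t + 2) :=
    Nat.choose_succ_succ' _ _
  have h₅ : (A + 2).choose (t + 3) = (A + 1).choose (t + 2) + (A + 1).choose (t + 3) :=
    Nat.choose_succ_succ' _ _
  have h₆ : (A + 3).choose (t + 3) = (A + 2).choose (t + 2) + (A + 2).choose (t + 3) :=
    Nat.choose_succ_succ' _ _
  omega

def rootPowerSumCoeff (k : ℕ) : ℕ → ℕ
  | 0 => 3
  | j + 1 => (k + 2 * j + 2).choose (3 * j + 3) + 2 * (k + 2 * j + 1).choose (3 * j + 3)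

def invRootPowerSumCoeff (k : ℕ) : ℕ → ℕ
  | 0 => 3
  | j + 1 => 2 * (k + j + 1).choose (3 * j + 3) + (k + j).choose (3 * j + 3)

theorem rootPowerSumCoeff_eq_zero {k j : ℕ} (h : k < j) : rootPowerSumCoeff k j = 0 := by
  obtain ⟨j, rfl⟩ : ∃ i, j = i + 1 := ⟨j - 1, by omega⟩
  simp [rootPowerSumCoeff, Nat.choose_eq_zero_of_lt, show k + 2 * j + 1 < 3 * j + 3 by omega,
    show k + 2 * j + 2 < 3 * j + 3 by omega]

theorem invRootPowerSumCoeff_eq_zero {k j : ℕ} (h : k < 2 * j) :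
    invRootPowerSumCoeff k j = 0 := by
  obtain ⟨j, rfl⟩ : ∃ i, j = i + 1 := ⟨j - 1, by omega⟩
  simp [invRootPowerSumCoeff, Nat.choose_eq_zero_of_lt, show k + j + 1 < 3 * j + 3 by omega,
    show k + j < 3 * j + 3 by omega]

theorem rootPowerSumCoeff_add_three (k j : ℕ) :
    rootPowerSumCoeff (k + 3) (j + 1) + 3 * rootPowerSumCoeff (k + 1) (j + 1) =
      3 * rootPowerSumCoeff (k + 2) (j + 1) + rootPowerSumCoeff k (j + 1) +
        rootPowerSumCoeff (k + 2) j := by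
  cases j with
  | zero =>
    have h₁ := Nat.choose_third_difference (k + 2) 0
    have h₂ := Nat.choose_third_difference (k + 1) 0
    simp only [rootPowerSumCoeff, Nat.choose_zero_right] at *
    ring_nf at *
    omega
  | succ j =>
    have h₁ := Nat.choose_third_difference (k + 2 * j + 4) (3 * j + 3)
    have h₂ := Nat.choose_third_difference (k + 2 * j + 3) (3 * j + 3)
    simp only [rootPowerSumCoeff]
    ring_nf at *
    omega

theorem invRootPowerSumCoeff_add_three (k j : ℕ) :
    invRootPowerSumCoeff (k + 3) (j + 1) + 3 * invRootPowerSumCoeff (k + 1) (j + 1) =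
      3 * invRootPowerSumCoeff (k + 2) (j + 1) + invRootPowerSumCoeff k (j + 1) +
        invRootPowerSumCoeff (k + 1) j := by
  cases j with
  | zero =>
    have h₁ := Nat.choose_third_difference (k + 1) 0
    have h₂ := Nat.choose_third_difference k 0
    simp only [invRootPowerSumCoeff, Nat.choose_zero_right] at *
    ring_nf at *
    omega
  | succ j =>
    have h₁ := Nat.choose_third_difference (k + j + 2) (3 * j + 3)
    have h₂ := Nat.choose_third_difference (k + j + 1) (3 * j + 3)
    simp only [invRootPowerSumCoeff]
    ring_nf at *
    omega

theorem coeff_rootPowerSum : ∀ k j : ℕ, (rootPowerSum k).coeff j = rootPowerSumCoeff k j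
  | 0, j => by
    rcases j with _ | j
    · simp [cubicPowerSum, rootPowerSumCoeff]
    · simp [cubicPowerSum, coeff_ofNat_succ, rootPowerSumCoeff_eq_zero]
  | 1, j => by
    rcases j with _ | _ | j
    · simp [cubicPowerSum, rootPowerSumCoeff]
    · simp [cubicPowerSum, rootPowerSumCoeff]
    · simp [cubicPowerSum, coeff_ofNat_succ, coeff_X, rootPowerSumCoeff_eq_zero]
  | 2, j => by
    have h : rootPowerSum 2 = 3 + 6 * X + X ^ 2 := by
      simp only [rootPowerSum, cubicPowerSum]; ring
    rw [h]
    rcases j with _ | _ | _ | j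
    · simp [rootPowerSumCoeff]
    · simp [rootPowerSumCoeff, coeff_X]
    · simp [rootPowerSumCoeff, coeff_X]
    · simp [coeff_ofNat_succ, coeff_X, coeff_X_pow, rootPowerSumCoeff_eq_zero]
  | k + 3, 0 => by
    simp [cubicPowerSum, coeff_rootPowerSum k 0, coeff_rootPowerSum (k + 1) 0,
      coeff_rootPowerSum (k + 2) 0, rootPowerSumCoeff]
  | k + 3, j + 1 => by
    have h := rootPowerSumCoeff_add_three k j
    simp [cubicPowerSum, add_mul, coeff_rootPowerSum k (j + 1),
      coeff_rootPowerSum (k + 1) (j + 1), coeff_rootPowerSum (k + 2) (j + 1),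
      coeff_rootPowerSum (k + 2) j]
    omega

theorem coeff_invRootPowerSum : ∀ k j : ℕ,
    (invRootPowerSum k).coeff j = (-1) ^ j * invRootPowerSumCoeff k j
  | 0, j => by
    rcases j with _ | j
    · simp [cubicPowerSum, invRootPowerSumCoeff]
    · simp [cubicPowerSum, coeff_ofNat_succ, invRootPowerSumCoeff_eq_zero]
  | 1, j => by
    rcases j with _ | j
    · simp [cubicPowerSum, invRootPowerSumCoeff]
    · have : 1 < 2 * (j + 1) := by omega
      simp [cubicPowerSum, coeff_ofNat_succ, invRootPowerSumCoeff_eq_zero this]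
  | 2, j => by
    have h : invRootPowerSum 2 = 3 - 2 * X := by
      simp only [invRootPowerSum, cubicPowerSum]; ring
    rw [h]
    rcases j with _ | _ | j
    · simp [invRootPowerSumCoeff]
    · simp [invRootPowerSumCoeff, coeff_X]
    · simp [coeff_ofNat_succ, coeff_X, invRootPowerSumCoeff_eq_zero]
  | k + 3, 0 => by
    simp [cubicPowerSum, coeff_invRootPowerSum k 0, coeff_invRootPowerSum (k + 1) 0,
      coeff_invRootPowerSum (k + 2) 0, invRootPowerSumCoeff]
  | k + 3, j + 1 => by
    have h : ((invRootPowerSumCoeff (k + 3) (j + 1) + 3 * invRootPowerSumCoeff (k + 1) (j + 1) :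
        ℕ) : ℤ) = _ := congrArg Nat.cast (invRootPowerSumCoeff_add_three k j)
    push_cast at h
    simp [cubicPowerSum, add_mul, coeff_invRootPowerSum k (j + 1),
      coeff_invRootPowerSum (k + 1) (j + 1), coeff_invRootPowerSum (k + 2) (j + 1),
      coeff_invRootPowerSum (k + 1) j, pow_succ]
    linear_combination (-1) ^ j * h

theorem succ_mul_rootPowerSumCoeff_succ (k j : ℕ) :
    (j + 1) * rootPowerSumCoeff k (j + 1) = k * (k + 2 * j + 1).choose (3 * j + 2) := by
  have hpascal : (k + 2 * j + 2).choose (3 * j + 3) =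
      (k + 2 * j + 1).choose (3 * j + 2) + (k + 2 * j + 1).choose (3 * j + 3) :=
    Nat.choose_succ_succ' _ _
  have hright := Nat.choose_succ_right_eq (k + 2 * j + 1) (3 * j + 2)
  rw [rootPowerSumCoeff, hpascal]
  rcases le_or_gt (j + 1) k with h | h
  · obtain ⟨m, rfl⟩ := Nat.exists_eq_add_of_le h
    rw [show j + 1 + m + 2 * j + 1 - (3 * j + 2) = m by omega] at hright
    ring_nf at hright ⊢
    linarith
  · simp [Nat.choose_eq_zero_of_lt, show k + 2 * j + 1 < 3 * j + 2 by omega,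
      show k + 2 * j + 1 < 3 * j + 3 by omega]

theorem succ_mul_invRootPowerSumCoeff_succ (k j : ℕ) :
    (j + 1) * invRootPowerSumCoeff k (j + 1) = k * (k + j).choose (3 * j + 2) := by
  have hpascal : (k + j + 1).choose (3 * j + 3) =
      (k + j).choose (3 * j + 2) + (k + j).choose (3 * j + 3) :=
    Nat.choose_succ_succ' _ _
  have hright := Nat.choose_succ_right_eq (k + j) (3 * j + 2)
  rw [invRootPowerSumCoeff, hpascal]
  rcases le_or_gt (2 * j + 2) k with h | h
  · obtain ⟨m, rfl⟩ := Nat.exists_eq_add_of_le h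
    rw [show 2 * j + 2 + m + j - (3 * j + 2) = m by omega] at hright
    ring_nf at hright ⊢
    linarith
  · simp [Nat.choose_eq_zero_of_lt, show k + j < 3 * j + 2 by omega,
      show k + j < 3 * j + 3 by omega]

theorem IsAlgClosed.exists_cubic_roots {K : Type*} [Field K] [IsAlgClosed K] (e₁ e₂ e₃ : K) :
    ∃ a b c : K, a + b + c = e₁ ∧ a * b + b * c + c * a = e₂ ∧ a * b * c = e₃ := by
  let P : Cubic K := ⟨1, -e₁, e₂, -e₃⟩
  have ha : P.a ≠ 0 := one_ne_zero
  obtain ⟨a, b, c, hroots⟩ :=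
    (Cubic.splits_iff_roots_eq_three (φ := RingHom.id K) ha).1 (IsAlgClosed.splits _)
  have hb := Cubic.b_eq_three_roots ha hroots
  have hc := Cubic.c_eq_three_roots ha hroots
  have hd := Cubic.d_eq_three_roots ha hroots
  simp only [RingHom.id_apply, one_mul, P] at hb hc hd
  exact ⟨a, b, c, by linear_combination hb, by linear_combination -hc, by linear_combination hd⟩

theorem IsPrimitiveRoot.prod_range_sub_pow {R : Type*} [CommRing R] [IsDomain R] {ζ : R} {n : ℕ}
    (hζ : IsPrimitiveRoot ζ n) (hn : 0 < n) (t : R) :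
    ∏ m ∈ range n, (t - ζ ^ m) = t ^ n - 1 := by
  simpa [eval_prod] using congrArg (eval t) (X_pow_sub_C_eq_prod hζ hn (one_pow n)).symm

theorem IsPrimitiveRoot.prod_Ico_one_sub_pow {R : Type*} [CommRing R] [IsDomain R] {ζ : R}
    {n : ℕ} (hζ : IsPrimitiveRoot ζ n) (hn : 0 < n) :
    ∏ m ∈ Ico 1 n, (1 - ζ ^ m) = n := by
  obtain ⟨N, rfl⟩ : ∃ N, n = N + 1 := ⟨n - 1, by omega⟩
  rw [prod_Ico_eq_prod_range]
  simpa [add_comm] using hζ.prod_one_sub_pow_eq_order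

theorem Polynomial.coeff_prod_one_add_C_mul_X {R ι : Type*} [CommSemiring R] (s : Finset ι)
    (w : ι → R) (k : ℕ) :
    (∏ i ∈ s, (1 + C (w i) * X)).coeff k = ∑ t ∈ s.powersetCard k, ∏ i ∈ t, w i := by
  classical
  simp_rw [prod_one_add, finsetSum_coeff, prod_mul_distrib, prod_const, ← map_prod,
    coeff_C_mul_X_pow, powersetCard_eq_filter, sum_filter, eq_comm]

section RootsOfUnity

variable {K : Type*} [Field K] [IsAlgClosed K] {ζ : K} {n : ℕ}

theorem mul_prod_one_sub_pow_cube_add_eq (hζ : IsPrimitiveRoot ζ n) (hn : 0 < n) (x : K) :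
    x * ∏ m ∈ Ico 1 n, ((1 - ζ ^ m) ^ 3 + x * ζ ^ (2 * m)) =
      aeval x (rootPowerSum n - invRootPowerSum n) := by
  obtain ⟨a, b, c, h₁, h₂, h₃⟩ := IsAlgClosed.exists_cubic_roots (3 + x) 3 1
  have hfactor (t : K) : (1 - t) ^ 3 + x * t ^ 2 = (a - t) * (b - t) * (c - t) := by
    linear_combination -t ^ 2 * h₁ + t * h₂ - h₃
  have habc : (a * b * c) ^ n = 1 := by rw [h₃, one_pow]
  have hthree : aeval x (3 : ℤ[X]) = 3 := map_ofNat _ 3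
  have hroots : a ^ n + b ^ n + c ^ n = aeval x (rootPowerSum n) := by
    simp [map_cubicPowerSum, pow_add_pow_add_pow_eq_cubicPowerSum, h₁, h₂, h₃, hthree]
  have hinvRoots : (a * b) ^ n + (b * c) ^ n + (c * a) ^ n = aeval x (invRootPowerSum n) := by
    rw [map_cubicPowerSum, pow_add_pow_add_pow_eq_cubicPowerSum, h₂]
    simp only [hthree, map_add, aeval_X, map_one]
    congr 1
    · linear_combination a * b * c * h₁ + (3 + x) * h₃
    · linear_combination (a * b * c + 1) * h₃
  calc x * ∏ m ∈ Ico 1 n, ((1 - ζ ^ m) ^ 3 + x * ζ ^ (2 * m))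
      = ∏ m ∈ range n, ((1 - ζ ^ m) ^ 3 + x * ζ ^ (2 * m)) := by
        simp [prod_range_eq_mul_Ico _ hn]
    _ = ∏ m ∈ range n, ((a - ζ ^ m) * (b - ζ ^ m) * (c - ζ ^ m)) := by
        simp_rw [pow_mul', hfactor]
    _ = (a ^ n - 1) * (b ^ n - 1) * (c ^ n - 1) := by
        simp_rw [prod_mul_distrib, hζ.prod_range_sub_pow hn]
    _ = (a ^ n + b ^ n + c ^ n) - ((a * b) ^ n + (b * c) ^ n + (c * a) ^ n) := by
        linear_combination habc
    _ = _ := by rw [hroots, hinvRoots, map_sub]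

theorem natCast_pow_three_mul_sum_powersetCard_eq (hζ : IsPrimitiveRoot ζ n) (hn : 0 < n)
    (r : ℕ) :
    (n : K) ^ 3 * ∑ s ∈ powersetCard r (Ico 1 n), ∏ m ∈ s, ζ ^ (2 * m) / (1 - ζ ^ m) ^ 3 =
      rootPowerSumCoeff n (r + 1) + (-1) ^ r * invRootPowerSumCoeff n (r + 1) := by
  have hpoly :
      C ((n : K) ^ 3) * (∏ m ∈ Ico 1 n, (1 + C (ζ ^ (2 * m) / (1 - ζ ^ m) ^ 3) * X)) * X =
        (rootPowerSum n - invRootPowerSum n).map (algebraMap ℤ K) := by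
    refine Polynomial.funext fun x => ?_
    rw [eval_map_algebraMap, ← mul_prod_one_sub_pow_cube_add_eq hζ hn x,
      ← hζ.prod_Ico_one_sub_pow hn]
    simp only [eval_mul, eval_C, eval_X, eval_prod, eval_add, eval_one]
    rw [← prod_pow, ← prod_mul_distrib, mul_comm _ x]
    congr 1
    refine prod_congr rfl fun m hm => ?_
    have hm' : 1 - ζ ^ m ≠ 0 :=
      sub_ne_zero.2 (hζ.pow_ne_one_of_pos_of_lt (by grind) (mem_Ico.1 hm).2).symm
    field_simp
  have hcoeff := congrArg (coeff · (r + 1)) hpoly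
  simp only [coeff_C_mul, coeff_mul_X, coeff_prod_one_add_C_mul_X, coeff_map, coeff_sub,
    coeff_rootPowerSum, coeff_invRootPowerSum] at hcoeff
  rw [hcoeff]
  push_cast
  ring

end RootsOfUnity

theorem mem_msets {n r : ℕ} {m : Fin r → Fin n} :
    m ∈ msets n r ↔ StrictAnti m ∧ ∀ i, 0 < (m i : ℕ) := by
  simp [msets, StrictAnti]

theorem sum_msets_prod_eq_sum_powersetCard {R : Type*} [CommSemiring R] (n r : ℕ)
    (g : ℕ → R) :
    ∑ m ∈ msets n r, ∏ i, g (m i) = ∑ s ∈ powersetCard r (Ico 1 n), ∏ v ∈ s, g v := by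
  have hmono {m : Fin r → Fin n} (hm : StrictAnti m) :
      StrictMono fun i : Fin r ↦ (m i.rev : ℕ) :=
    Fin.val_strictMono.comp (hm.comp Fin.rev_strictAnti)
  have hcard {m : Fin r → Fin n} (hm : StrictAnti m) :
      (univ.image fun i ↦ (m i : ℕ)).card = r := by
    rw [card_image_of_injective (f := fun i ↦ (m i : ℕ)) _
      (Fin.val_injective.comp hm.injective),
      card_univ, Fintype.card_fin]
  refine sum_bij' (fun m _ ↦ univ.image fun i ↦ (m i : ℕ))
    (fun s hs i ↦ ⟨s.orderEmbOfFin (mem_powersetCard.1 hs).2 i.rev,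
      (mem_Ico.1 ((mem_powersetCard.1 hs).1 (orderEmbOfFin_mem _ _ _))).2⟩) ?_ ?_ ?_ ?_ ?_
  · intro m hm
    obtain ⟨hanti, hpos⟩ := mem_msets.1 hm
    refine mem_powersetCard.2 ⟨fun v hv ↦ ?_, hcard hanti⟩
    obtain ⟨i, -, rfl⟩ := mem_image.1 hv
    exact mem_Ico.2 ⟨hpos i, (m i).isLt⟩
  · intro s hs
    refine mem_msets.2 ⟨fun i j hij ↦ ?_, fun i ↦ ?_⟩
    · exact (s.orderEmbOfFin _).strictMono (Fin.rev_lt_rev.2 hij)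
    · exact (mem_Ico.1 ((mem_powersetCard.1 hs).1 (orderEmbOfFin_mem _ _ _))).1
  · intro m hm
    have h := orderEmbOfFin_unique (hcard (mem_msets.1 hm).1)
      (fun i ↦ mem_image_of_mem _ (mem_univ i.rev)) (hmono (mem_msets.1 hm).1)
    ext i
    simp [← congrFun h i.rev]
  · intro s hs
    ext v
    simp only [mem_image, mem_univ, true_and]
    constructor
    · rintro ⟨i, rfl⟩
      exact orderEmbOfFin_mem _ _ _
    · intro hv
      obtain ⟨i, rfl⟩ : v ∈ Set.range (s.orderEmbOfFin (mem_powersetCard.1 hs).2) := by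
        rwa [range_orderEmbOfFin]
      exact ⟨i.rev, by rw [Fin.rev_rev]⟩
  · intro m hm
    rw [prod_image fun i _ j _ h ↦ (mem_msets.1 hm).1.injective (Fin.val_injective h)]

theorem z_threes_eq (n r : ℕ) (q : ℂ) :
    z n (fun _ : Fin r => 3) q =
      (1 - q) ^ (3 * r) *
        ∑ s ∈ powersetCard r (Ico 1 n), ∏ m ∈ s, q ^ (2 * m) / (1 - q ^ m) ^ 3 := by
  have hterm (k : ℕ) :
      q ^ ((3 - 1) * k) / ((1 - q ^ k) / (1 - q)) ^ 3 =
        (1 - q) ^ 3 * (q ^ (2 * k) / (1 - q ^ k) ^ 3) := by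
    rw [div_pow, div_div_eq_mul_div]
    ring
  rw [z, ← sum_msets_prod_eq_sum_powersetCard, mul_sum]
  simp only [hterm, prod_mul_distrib, prod_const, card_univ, Fintype.card_fin, ← pow_mul]

theorem zn_threes_eval_general (n : ℕ) (hn : 0 < n) (ζ : ℂ) (hζ : IsPrimitiveRoot ζ n)
    (r : ℕ) :
    z n (fun _ : Fin r => 3) ζ =
      (1 / ((n : ℂ) ^ 2 * ((r : ℂ) + 1))) *
        (((n + 2 * r + 1).choose (3 * r + 2) : ℂ) +
          (-1 : ℂ) ^ r * ((n + r).choose (3 * r + 2) : ℂ)) *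
        (1 - ζ) ^ (3 * r) := by
  have hkey := natCast_pow_three_mul_sum_powersetCard_eq hζ hn r
  have hroot : ((r : ℂ) + 1) * rootPowerSumCoeff n (r + 1) =
      n * ((n + 2 * r + 1).choose (3 * r + 2) : ℂ) := by
    exact_mod_cast succ_mul_rootPowerSumCoeff_succ n r
  have hinvRoot : ((r : ℂ) + 1) * invRootPowerSumCoeff n (r + 1) =
      n * ((n + r).choose (3 * r + 2) : ℂ) := by
    exact_mod_cast succ_mul_invRootPowerSumCoeff_succ n r
  have hn₀ : (n : ℂ) ≠ 0 := Nat.cast_ne_zero.2 hn.ne'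
  have hsum : (n : ℂ) ^ 2 * ((r : ℂ) + 1) *
      ∑ s ∈ powersetCard r (Ico 1 n), ∏ m ∈ s, ζ ^ (2 * m) / (1 - ζ ^ m) ^ 3 =
      ((n + 2 * r + 1).choose (3 * r + 2) : ℂ) + (-1) ^ r * ((n + r).choose (3 * r + 2) : ℂ) :=
    mul_left_cancel₀ hn₀ <| by
      linear_combination ((r : ℂ) + 1) * hkey + hroot + (-1) ^ r * hinvRoot
  rw [z_threes_eq, ← hsum]
  field_simp

/-- evaluation of `z_n({3}^r; ζ_n)`. -/
theorem zn_threes_eval (n : ℕ) (hn : 0 < n) (ζ : ℂ) (hζ : IsPrimitiveRoot ζ n)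
    (r : ℕ) (hr : 1 ≤ r) :
    z n (fun _ : Fin r => 3) ζ =
      (1 / ((n : ℂ) ^ 2 * ((r : ℂ) + 1))) *
        (((n + 2 * r + 1).choose (3 * r + 2) : ℂ) +
          (-1 : ℂ) ^ r * ((n + r).choose (3 * r + 2) : ℂ)) *
        (1 - ζ) ^ (3 * r) :=
  zn_threes_eval_general n hn ζ hζ r
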